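/- arXiv:2112.02055 — 2 statements merged into one kernel-verified Lean document; each statement's English description precedes it below -/
import Mathlib

section
/- Let F ⊂ ℝ₊ × ℝ^d and let H, H' ∈ (0,1) with H < H'. Then dim_{Ψ,H'}(F) ≤ min( (H'/H)·dim_{Ψ,H}(F), dim_{Ψ,H}(F) + (H'−H)·d ). -/
open MeasureTheory ENNReal Set

noncomputable section

/-- The `H`-parabolic rectangle `[a, a+δ] × ∏_{j=1}^d [b_j, b_j + δ^H]`. -/
def parRect (d : ℕ) (H : ℝ) (a : ℝ) (b : Fin d → ℝ) (δ : ℝ) : Set (ℝ × (Fin d → ℝ)) :=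
  Set.Icc a (a + δ) ×ˢ Set.univ.pi fun j => Set.Icc (b j) (b j + δ ^ H)

/-- The `H`-parabolic `β`-dimensional Hausdorff content `Ψ_H^β(F)`:
the infimum of `Σ_j δ_j^β` over all countable covers of `F` by parabolic rectangles. -/
def parContent (d : ℕ) (H β : ℝ) (F : Set (ℝ × (Fin d → ℝ))) : ℝ≥0∞ :=
  ⨅ (r : ℕ → ℝ × (Fin d → ℝ) × ℝ) (_ : ∀ n, 0 < (r n).2.2)
    (_ : F ⊆ ⋃ n, parRect d H (r n).1 (r n).2.1 (r n).2.2),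
    ∑' n, ENNReal.ofReal ((r n).2.2 ^ β)

/-- The `H`-parabolic Hausdorff dimension `dim_{Ψ,H}(F) = inf {β : Ψ_H^β(F) = 0}`. -/
def parDim (d : ℕ) (H : ℝ) (F : Set (ℝ × (Fin d → ℝ))) : ℝ :=
  sInf {β : ℝ | 0 ≤ β ∧ parContent d H β F = 0}

/-!
An `H`-rectangle of side `δ < 1` lies in the `H'`-rectangle of side `δ ^ (H / H')`, whose cost at
exponent `(H' / H) β` is again `δ ^ β`. It is also covered by a grid of `⌈δ ^ (H - H')⌉₊ ^ d`
`H'`-rectangles of side `δ`, whose total cost at exponent `β + (H' - H) d` is at most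
`2 ^ d δ ^ β`. Either refinement turns covers witnessing `Ψ_H^β(F) = 0` into covers witnessing
that the `H'`-content vanishes at the larger exponent, and taking infima over `β` gives both
bounds. If no exponent is `H`-null then `dim_{Ψ,H}(F)` is the junk value `sInf ∅ = 0`; this case
is covered because an `H'`-rectangle of side `δ < 1` lies in the `H`-rectangle of side `δ`, so no
exponent is `H'`-null either.
-/

theorem exists_nat_lt_le_le_add_one {t : ℝ} {N : ℕ} (hN : 0 < N) (ht : t ∈ Icc (0 : ℝ) N) :
    ∃ k < N, (k : ℝ) ≤ t ∧ t ≤ k + 1 := by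
  rcases ht.2.lt_or_eq with htN | rfl
  · exact ⟨⌊t⌋₊, (Nat.floor_lt ht.1).2 htN, Nat.floor_le ht.1, (Nat.lt_floor_add_one t).le⟩
  · refine ⟨N - 1, Nat.sub_lt hN one_pos, ?_, ?_⟩ <;> rw [Nat.cast_pred hN] <;> linarith

theorem Icc_subset_iUnion_Icc_add_mul {c L h : ℝ} {N : ℕ} (hN : 0 < N) (hh : 0 < h)
    (hL : L ≤ N * h) :
    Icc c (c + L) ⊆ ⋃ k : Fin N, Icc (c + k * h) (c + k * h + h) := by
  intro x hx
  have ht : (x - c) / h ∈ Icc (0 : ℝ) N :=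
    ⟨div_nonneg (by linarith [hx.1]) hh.le, (div_le_iff₀ hh).2 (by linarith [hx.2])⟩
  obtain ⟨k, hkN, hk, hk1⟩ := exists_nat_lt_le_le_add_one hN ht
  rw [le_div_iff₀ hh] at hk
  rw [div_le_iff₀ hh] at hk1
  exact mem_iUnion.2 ⟨⟨k, hkN⟩, by constructor <;> simp only <;> linarith⟩

theorem natCeil_rpow_pow_mul_rpow_le {H H' β δ : ℝ} (d : ℕ) (hδ : 0 < δ) (hδ1 : δ ≤ 1)
    (hHH' : H ≤ H') :
    (⌈δ ^ (H - H')⌉₊ : ℝ) ^ d * δ ^ (β + (H' - H) * d) ≤ 2 ^ d * δ ^ β := by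
  have h1 : 1 ≤ δ ^ (H - H') :=
    Real.one_le_rpow_of_pos_of_le_one_of_nonpos hδ hδ1 (by linarith)
  have hN : (⌈δ ^ (H - H')⌉₊ : ℝ) ≤ 2 * δ ^ (H - H') := by
    linarith [Nat.ceil_lt_add_one (zero_le_one.trans h1)]
  calc (⌈δ ^ (H - H')⌉₊ : ℝ) ^ d * δ ^ (β + (H' - H) * d)
      ≤ (2 * δ ^ (H - H')) ^ d * δ ^ (β + (H' - H) * d) := by gcongr
    _ = 2 ^ d * δ ^ β := by
      rw [mul_pow, ← Real.rpow_mul_natCast hδ.le, mul_assoc, ← Real.rpow_add hδ]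
      ring_nf

section ParabolicContent

variable {d : ℕ} {H H' β γ : ℝ} {F : Set (ℝ × (Fin d → ℝ))}

theorem mem_parRect_self (a : ℝ) (b : Fin d → ℝ) {δ : ℝ} (hδ : 0 ≤ δ) :
    (a, b) ∈ parRect d H a b δ :=
  ⟨left_mem_Icc.2 (by linarith),
    fun j _ => left_mem_Icc.2 (by linarith [Real.rpow_nonneg hδ H])⟩

theorem parRect_subset_parRect {a δ δ' : ℝ} {b : Fin d → ℝ} (hδ : δ ≤ δ')
    (hδH : δ ^ H ≤ δ' ^ H') : parRect d H a b δ ⊆ parRect d H' a b δ' :=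
  prod_mono (Icc_subset_Icc_right (by linarith))
    (pi_mono fun _ _ => Icc_subset_Icc_right (by linarith))

theorem parContent_exponent_zero : parContent d H 0 F = ⊤ := by
  simp [parContent]

theorem parContent_le_tsum_of_subset_iUnion {ι : Type*} [Countable ι] [Infinite ι]
    (s : ι → ℝ × (Fin d → ℝ) × ℝ) (hs : ∀ i, 0 < (s i).2.2)
    (hF : F ⊆ ⋃ i, parRect d H (s i).1 (s i).2.1 (s i).2.2) :
    parContent d H β F ≤ ∑' i, ENNReal.ofReal ((s i).2.2 ^ β) := by
  obtain ⟨_⟩ := nonempty_denumerable ι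
  let e : ℕ ≃ ι := (Denumerable.eqv ι).symm
  have hF' : F ⊆ ⋃ n, parRect d H (s (e n)).1 (s (e n)).2.1 (s (e n)).2.2 := by
    rwa [e.surjective.iUnion_comp fun i => parRect d H (s i).1 (s i).2.1 (s i).2.2]
  calc parContent d H β F ≤ ∑' n, ENNReal.ofReal ((s (e n)).2.2 ^ β) :=
        iInf_le_of_le (s ∘ e) <| iInf_le_of_le (fun n => hs _) <| iInf_le_of_le hF' le_rfl
    _ = ∑' i, ENNReal.ofReal ((s i).2.2 ^ β) := e.tsum_eq fun i => ENNReal.ofReal ((s i).2.2 ^ β)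

theorem exists_cover_of_parContent_lt {ε : ℝ≥0∞} (h : parContent d H β F < ε) :
    ∃ r : ℕ → ℝ × (Fin d → ℝ) × ℝ, (∀ n, 0 < (r n).2.2) ∧
      F ⊆ ⋃ n, parRect d H (r n).1 (r n).2.1 (r n).2.2 ∧
      ∑' n, ENNReal.ofReal ((r n).2.2 ^ β) < ε := by
  simpa only [parContent, iInf_lt_iff, exists_prop] using h

theorem parContent_eq_zero_of_refine (C : ℝ≥0∞) (hC : C ≠ ⊤) (hβ : 0 < β)
    (hrefine : ∀ (a : ℝ) (b : Fin d → ℝ) (δ : ℝ), 0 < δ → δ < 1 →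
      ∃ (ι : Type) (_ : Fintype ι) (s : ι → ℝ × (Fin d → ℝ) × ℝ), (∀ i, 0 < (s i).2.2) ∧
        parRect d H a b δ ⊆ ⋃ i, parRect d H' (s i).1 (s i).2.1 (s i).2.2 ∧
        ∑ i, ENNReal.ofReal ((s i).2.2 ^ γ) ≤ C * ENNReal.ofReal (δ ^ β))
    (h : parContent d H β F = 0) : parContent d H' γ F = 0 := by
  refine nonpos_iff_eq_zero.1 (le_of_forall_gt_imp_ge_of_dense fun ε hε => ?_)
  -- capping the cost by `1` forces every side below `1`, where the refinement applies
  have hlt : parContent d H β F < min (ε / C) 1 := by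
    rw [h]; exact lt_min (ENNReal.div_pos hε.ne' hC) one_pos
  obtain ⟨r, hr_pos, hr_cov, hr_sum⟩ := exists_cover_of_parContent_lt hlt
  have hr_lt_one (n : ℕ) : (r n).2.2 < 1 := by
    have hn : ENNReal.ofReal ((r n).2.2 ^ β) < 1 :=
      (ENNReal.le_tsum n).trans_lt (hr_sum.trans_le (min_le_right _ _))
    by_contra! h1
    exact hn.not_ge (by simpa using ENNReal.ofReal_le_ofReal (Real.one_le_rpow h1 hβ.le))
  choose ι _ s hs_pos hs_cov hs_cost using
    fun n => hrefine (r n).1 (r n).2.1 (r n).2.2 (hr_pos n) (hr_lt_one n)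
  have (n : ℕ) : Nonempty (ι n) := by
    obtain ⟨i, -⟩ := mem_iUnion.1 (hs_cov n (mem_parRect_self _ _ (hr_pos n).le))
    exact ⟨i⟩
  have hcov : F ⊆ ⋃ p : Σ n, ι n, parRect d H' (s p.1 p.2).1 (s p.1 p.2).2.1 (s p.1 p.2).2.2 := by
    rw [iUnion_sigma]
    exact hr_cov.trans (iUnion_mono hs_cov)
  calc parContent d H' γ F ≤ ∑' p : Σ n, ι n, ENNReal.ofReal ((s p.1 p.2).2.2 ^ γ) :=
        parContent_le_tsum_of_subset_iUnion (ι := Σ n, ι n) (fun p => s p.1 p.2)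
          (fun p => hs_pos p.1 p.2) hcov
    _ = ∑' n, ∑ i, ENNReal.ofReal ((s n i).2.2 ^ γ) := by
        simp only [ENNReal.tsum_sigma', tsum_fintype]
    _ ≤ ∑' n, C * ENNReal.ofReal ((r n).2.2 ^ β) := ENNReal.tsum_le_tsum hs_cost
    _ = C * ∑' n, ENNReal.ofReal ((r n).2.2 ^ β) := ENNReal.tsum_mul_left
    _ ≤ C * (ε / C) := by gcongr; exact hr_sum.le.trans (min_le_left _ _)
    _ ≤ ε := ENNReal.mul_div_le

theorem parRect_subset_iUnion_grid {a δ : ℝ} {b : Fin d → ℝ} {N : ℕ} (hN : 0 < N) (hδ : 0 < δ)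
    (hNδ : δ ^ H ≤ N * δ ^ H') :
    parRect d H a b δ ⊆ ⋃ k : Fin d → Fin N, parRect d H' a (fun j => b j + k j * δ ^ H') δ := by
  rintro ⟨x, y⟩ ⟨hx, hy⟩
  have hcell (j : Fin d) := Icc_subset_iUnion_Icc_add_mul hN (Real.rpow_pos_of_pos hδ H') hNδ
    (hy j (mem_univ j))
  choose k hk using fun j => mem_iUnion.1 (hcell j)
  exact mem_iUnion.2 ⟨k, hx, fun j _ => hk j⟩

theorem parContent_eq_zero_of_le (hHH' : H ≤ H') (hβ : 0 < β)
    (h : parContent d H' β F = 0) : parContent d H β F = 0 := by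
  refine parContent_eq_zero_of_refine 1 one_ne_top hβ (fun a b δ hδ hδ1 =>
    ⟨Unit, inferInstance, fun _ => (a, b, δ), fun _ => hδ, ?_, by simp⟩) h
  rw [iUnion_const]
  exact parRect_subset_parRect le_rfl (Real.rpow_le_rpow_of_exponent_ge hδ hδ1.le hHH')

theorem parContent_mul_exponent_eq_zero (hH : 0 < H) (hHH' : H ≤ H') (hβ : 0 < β)
    (h : parContent d H β F = 0) : parContent d H' (H' / H * β) F = 0 := by
  have hH' : 0 < H' := hH.trans_le hHH'
  refine parContent_eq_zero_of_refine 1 one_ne_top hβ (fun a b δ hδ hδ1 => ?_) h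
  have hside : δ ≤ δ ^ (H / H') := by
    simpa using Real.rpow_le_rpow_of_exponent_ge hδ hδ1.le (div_le_one_of_le₀ hHH' hH'.le)
  have hheight : δ ^ H = (δ ^ (H / H')) ^ H' := by
    rw [← Real.rpow_mul hδ.le, div_mul_cancel₀ _ hH'.ne']
  have hcost : (δ ^ (H / H')) ^ (H' / H * β) = δ ^ β := by
    rw [← Real.rpow_mul hδ.le]
    congr 1
    field_simp
  refine ⟨Unit, inferInstance, fun _ => (a, b, δ ^ (H / H')),
    fun _ => Real.rpow_pos_of_pos hδ _, ?_, by simp [hcost]⟩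
  rw [iUnion_const]
  exact parRect_subset_parRect hside hheight.le

theorem parContent_add_exponent_eq_zero (hHH' : H ≤ H') (hβ : 0 < β)
    (h : parContent d H β F = 0) : parContent d H' (β + (H' - H) * d) F = 0 := by
  refine parContent_eq_zero_of_refine (2 ^ d) (pow_ne_top ofNat_ne_top) hβ
    (fun a b δ hδ hδ1 => ?_) h
  set N := ⌈δ ^ (H - H')⌉₊
  have hN : 0 < N := Nat.ceil_pos.2 (Real.rpow_pos_of_pos hδ _)
  have hNδ : δ ^ H ≤ N * δ ^ H' := by
    calc δ ^ H = δ ^ (H - H') * δ ^ H' := by rw [← Real.rpow_add hδ, sub_add_cancel]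
      _ ≤ N * δ ^ H' := by gcongr; exact Nat.le_ceil _
  refine ⟨Fin d → Fin N, inferInstance, fun k => (a, fun j => b j + k j * δ ^ H', δ),
    fun _ => hδ, parRect_subset_iUnion_grid hN hδ hNδ, ?_⟩
  calc ∑ _ : Fin d → Fin N, ENNReal.ofReal (δ ^ (β + (H' - H) * d))
      = ENNReal.ofReal ((N : ℝ) ^ d * δ ^ (β + (H' - H) * d)) := by
        rw [ENNReal.ofReal_mul (by positivity)]
        simp
    _ ≤ ENNReal.ofReal (2 ^ d * δ ^ β) :=
        ENNReal.ofReal_le_ofReal (natCeil_rpow_pow_mul_rpow_le d hδ hδ1.le hHH')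
    _ = 2 ^ d * ENNReal.ofReal (δ ^ β) := by
        rw [ENNReal.ofReal_mul (by positivity)]
        simp

theorem parDim_le_of_parContent_eq_zero {f : ℝ → ℝ} (hf : Monotone f) (hfc : Continuous f)
    (hf0 : 0 ≤ f 0) (hmap : ∀ β, 0 < β → parContent d H β F = 0 → parContent d H' (f β) F = 0)
    (hback : ∀ β, 0 < β → parContent d H' β F = 0 → parContent d H β F = 0) :
    parDim d H' F ≤ f (parDim d H F) := by
  have hpos {H β : ℝ} (hβ : 0 ≤ β) (h : parContent d H β F = 0) : 0 < β :=
    hβ.lt_of_ne <| by rintro rfl; simp [parContent_exponent_zero] at h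
  have hbdd (H : ℝ) : BddBelow {β | 0 ≤ β ∧ parContent d H β F = 0} := ⟨0, fun _ hβ => hβ.1⟩
  rcases eq_empty_or_nonempty {β | 0 ≤ β ∧ parContent d H β F = 0} with hS | hS
  · have hS' : {β | 0 ≤ β ∧ parContent d H' β F = 0} = ∅ :=
      eq_empty_of_forall_notMem fun β ⟨hβ, h⟩ =>
        hS.subset ⟨hβ, hback β (hpos hβ h) h⟩
    simpa only [parDim, hS, hS', Real.sInf_empty] using hf0
  · have himage : f '' {β | 0 ≤ β ∧ parContent d H β F = 0} ⊆
        {β | 0 ≤ β ∧ parContent d H' β F = 0} := by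
      rintro _ ⟨β, ⟨hβ, h⟩, rfl⟩
      exact ⟨hf0.trans (hf hβ), hmap β (hpos hβ h) h⟩
    calc parDim d H' F ≤ sInf (f '' {β | 0 ≤ β ∧ parContent d H β F = 0}) :=
          csInf_le_csInf (hbdd H') (hS.image f) himage
      _ = f (parDim d H F) := (hf.map_csInf_of_continuousAt hfc.continuousAt hS (hbdd H)).symm

end ParabolicContent

theorem parDim_upper_comparison_general (d : ℕ) (H H' : ℝ) (hH : H ∈ Set.Ioo (0:ℝ) 1)
    (hH' : H' ∈ Set.Ioo (0:ℝ) 1) (hHH' : H < H')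
    (F : Set (ℝ × (Fin d → ℝ))) :
    parDim d H' F ≤ min (H' / H * parDim d H F) (parDim d H F + (H' - H) * d) := by
  have hback (β : ℝ) (hβ : 0 < β) : parContent d H' β F = 0 → parContent d H β F = 0 :=
    parContent_eq_zero_of_le hHH'.le hβ
  have hslope : 0 ≤ H' / H := div_nonneg hH'.1.le hH.1.le
  have hshift : 0 ≤ (H' - H) * d := mul_nonneg (sub_nonneg.2 hHH'.le) d.cast_nonneg
  refine le_min ?_ ?_
  · exact parDim_le_of_parContent_eq_zero (monotone_mul_left_of_nonneg hslope)
      (continuous_const_mul _) (by simp)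
      (fun β hβ => parContent_mul_exponent_eq_zero hH.1 hHH'.le hβ) hback
  · exact parDim_le_of_parContent_eq_zero (monotone_id.add_const _) (continuous_add_const _)
      (by simpa using hshift) (fun β hβ => parContent_add_exponent_eq_zero hHH'.le hβ) hback

/-- For `F ⊂ ℝ₊ × ℝ^d` and `H, H' ∈ (0,1)` with `H < H'`:
`dim_{Ψ,H'}(F) ≤ min((H'/H)·dim_{Ψ,H}(F), dim_{Ψ,H}(F) + (H'−H)·d)`. -/
theorem parDim_upper_comparison (d : ℕ) (H H' : ℝ) (hH : H ∈ Set.Ioo (0:ℝ) 1)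
    (hH' : H' ∈ Set.Ioo (0:ℝ) 1) (hHH' : H < H')
    (F : Set (ℝ × (Fin d → ℝ))) (hF : ∀ p ∈ F, 0 ≤ p.1) :
    parDim d H' F ≤ min (H' / H * parDim d H F) (parDim d H F + (H' - H) * d) :=
  parDim_upper_comparison_general d H H' hH hH' hHH' F
end
end

section
/- Let H ∈ (0,1), let A be a Borel subset of [0,1], let 0 < α ≤ H and let f : [0,1] → ℝ^d be α-Hölder continuous, i.e. there exists K ≥ 0 with ‖f(x)−f(y)‖_∞ ≤ K|x−y|^α for all x, y ∈ [0,1]. Then dim_{Ψ,H}(Gr_A(f)) ≤ min( (H/α)·dim(A), dim(A) + (H−α)·d ). -/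
open MeasureTheory ENNReal Set

noncomputable section

/-!
Cover `A` by intervals `[c n, c n + δ n]` with `∑ δ n ^ s` small, where `dim A < s`. Over such an
interval `f` oscillates by at most `2 K δ^α`, so for any `θ ≤ 1` with `α ≤ θ H` this piece of the
graph is covered by `≲ δ^((α - θ H) d)` parabolic rectangles of width `δ^θ`, at total cost
`≲ δ^((α - θ H) d + θ β)`. Hence `Ψ_H^β` of the graph vanishes as soon as
`dim A < (α - θ H) d + θ β`; the choices `θ = α / H` and `θ = 1` give the two bounds.
-/

lemma exists_pos_tsum_ofReal_rpow_lt {β : ℝ} (hβ : 0 < β) {ε : ℝ≥0∞} (hε : ε ≠ 0) (ι : Type*)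
    [Countable ι] : ∃ τ : ι → ℝ, (∀ i, 0 < τ i) ∧ ∑' i, ENNReal.ofReal (τ i ^ β) < ε := by
  obtain ⟨ε', hε'0, hε'⟩ := ENNReal.exists_pos_sum_of_countable hε ι
  refine ⟨fun i => (ε' i : ℝ) ^ β⁻¹, fun i => by have := hε'0 i; positivity, ?_⟩
  convert hε' using 3 with i
  rw [← Real.rpow_mul (ε' i).coe_nonneg, inv_mul_cancel₀ hβ.ne', Real.rpow_one,
    ENNReal.ofReal_coe_nnreal]

section ParabolicContent

variable {d : ℕ} {H β : ℝ}

theorem parContent_le_tsum {F : Set (ℝ × (Fin d → ℝ))} {ι : Type*} [Countable ι] (hβ : 0 < β)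
    (a : ι → ℝ) (b : ι → Fin d → ℝ) (δ : ι → ℝ) (hδ : ∀ i, 0 < δ i)
    (hF : F ⊆ ⋃ i, parRect d H (a i) (b i) (δ i)) :
    parContent d H β F ≤ ∑' i, ENNReal.ofReal (δ i ^ β) := by
  refine ENNReal.le_of_forall_pos_le_add fun ε hε _ => ?_
  obtain ⟨e, he⟩ := Countable.exists_injective_nat ι
  obtain ⟨τ, hτ, hτε⟩ := exists_pos_tsum_ofReal_rpow_lt hβ (ε := ε) (by simpa using hε.ne') ℕ
  -- The rectangles are re-indexed by `ℕ` through `e`; unused indices get rectangles of side `τ m`.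
  let r : ℕ → ℝ × (Fin d → ℝ) × ℝ :=
    fun m => (Function.extend e a 0 m, Function.extend e b 0 m, Function.extend e δ τ m)
  have hr : ∀ i, r (e i) = (a i, b i, δ i) := fun i => by simp [r, he.extend_apply]
  have hr_pos : ∀ m, 0 < (r m).2.2 := by
    intro m
    by_cases hm : ∃ i, e i = m
    · obtain ⟨i, rfl⟩ := hm
      simpa [hr] using hδ i
    · simpa [r, Function.extend_apply' _ _ _ hm] using hτ m
  have hr_cover : F ⊆ ⋃ m, parRect d H (r m).1 (r m).2.1 (r m).2.2 := by
    refine hF.trans (iUnion_subset fun i => ?_)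
    exact subset_iUnion_of_subset (e i) (by simp [hr])
  have hr_cost : ∀ m, ENNReal.ofReal ((r m).2.2 ^ β) ≤
      Function.extend e (fun i => ENNReal.ofReal (δ i ^ β)) 0 m + ENNReal.ofReal (τ m ^ β) := by
    intro m
    by_cases hm : ∃ i, e i = m
    · obtain ⟨i, rfl⟩ := hm
      simp [hr, he.extend_apply]
    · simp [r, Function.extend_apply' _ _ _ hm]
  calc parContent d H β F ≤ ∑' m, ENNReal.ofReal ((r m).2.2 ^ β) :=
        iInf₂_le_of_le r hr_pos (iInf_le_of_le hr_cover le_rfl)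
    _ ≤ ∑' m, (Function.extend e (fun i => ENNReal.ofReal (δ i ^ β)) 0 m +
          ENNReal.ofReal (τ m ^ β)) := ENNReal.tsum_le_tsum hr_cost
    _ = ∑' i, ENNReal.ofReal (δ i ^ β) + ∑' m, ENNReal.ofReal (τ m ^ β) := by
        rw [ENNReal.tsum_add, tsum_extend_zero he]
    _ ≤ ∑' i, ENNReal.ofReal (δ i ^ β) + ε := by gcongr

theorem parContent_mono {F G : Set (ℝ × (Fin d → ℝ))} (hFG : F ⊆ G) :
    parContent d H β F ≤ parContent d H β G :=
  iInf₂_mono fun _ _ => iInf_mono' fun hG => ⟨hFG.trans hG, le_rfl⟩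

theorem parContent_iUnion_le (hβ : 0 < β) (F : ℕ → Set (ℝ × (Fin d → ℝ))) :
    parContent d H β (⋃ n, F n) ≤ ∑' n, parContent d H β (F n) := by
  refine ENNReal.le_of_forall_pos_le_add fun ε hε hlt => ?_
  obtain ⟨ε', hε'0, hε'⟩ := ENNReal.exists_pos_sum_of_countable (ε := ε) (by simpa using hε.ne') ℕ
  have hcover : ∀ n, ∃ r : ℕ → ℝ × (Fin d → ℝ) × ℝ, (∀ m, 0 < (r m).2.2) ∧
      F n ⊆ ⋃ m, parRect d H (r m).1 (r m).2.1 (r m).2.2 ∧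
      ∑' m, ENNReal.ofReal ((r m).2.2 ^ β) < parContent d H β (F n) + ε' n := by
    intro n
    have hfin : parContent d H β (F n) ≠ ⊤ := ne_top_of_le_ne_top hlt.ne (ENNReal.le_tsum n)
    have := ENNReal.lt_add_right hfin (ENNReal.coe_ne_zero.2 (hε'0 n).ne')
    simpa only [parContent, iInf_lt_iff, exists_prop] using this
  choose r hr_pos hr_cover hr_cost using hcover
  calc parContent d H β (⋃ n, F n)
      ≤ ∑' p : ℕ × ℕ, ENNReal.ofReal ((r p.1 p.2).2.2 ^ β) := by
        refine parContent_le_tsum hβ (fun p : ℕ × ℕ => (r p.1 p.2).1)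
          (fun p : ℕ × ℕ => (r p.1 p.2).2.1) (fun p : ℕ × ℕ => (r p.1 p.2).2.2)
          (fun p => hr_pos p.1 p.2) ?_
        refine iUnion_subset fun n => (hr_cover n).trans (iUnion_subset fun m => ?_)
        exact subset_iUnion_of_subset (n, m) le_rfl
    _ = ∑' n, ∑' m, ENNReal.ofReal ((r n m).2.2 ^ β) :=
        ENNReal.tsum_prod (f := fun n m => ENNReal.ofReal ((r n m).2.2 ^ β))
    _ ≤ ∑' n, (parContent d H β (F n) + ε' n) := ENNReal.tsum_le_tsum fun n => (hr_cost n).le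
    _ ≤ ∑' n, parContent d H β (F n) + ε := by
        rw [ENNReal.tsum_add]; gcongr

theorem parDim_le_of_parContent_eq_zero_s6 {m : ℝ} {F : Set (ℝ × (Fin d → ℝ))}
    (hm : 0 ≤ m) (h : ∀ β, m < β → parContent d H β F = 0) : parDim d H F ≤ m := by
  refine le_of_forall_gt fun b hb => ?_
  have hmem : (m + b) / 2 ∈ {β : ℝ | 0 ≤ β ∧ parContent d H β F = 0} :=
    ⟨by linarith, h _ (by linarith)⟩
  exact (csInf_le ⟨0, fun _ hβ => hβ.1⟩ hmem).trans_lt (by linarith)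

end ParabolicContent

lemma ofReal_diam_rpow_le {X : Type*} [PseudoMetricSpace X] (t : Set X) {s : ℝ} (hs : 0 < s) :
    ENNReal.ofReal (Metric.diam t ^ s) ≤ ⨆ _ : t.Nonempty, Metric.ediam t ^ s := by
  rcases t.eq_empty_or_nonempty with rfl | ht
  · simp [Real.zero_rpow hs.ne']
  rw [iSup_pos ht, ← ENNReal.ofReal_rpow_of_nonneg Metric.diam_nonneg hs.le]
  exact ENNReal.rpow_le_rpow ENNReal.ofReal_toReal_le hs.le

theorem exists_Icc_cover_of_dimH_lt {A : Set ℝ} {s : ℝ} (hs : 0 < s)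
    (hA : dimH A < ENNReal.ofReal s) {ε : ℝ≥0∞} (hε : ε ≠ 0) :
    ∃ c δ : ℕ → ℝ, (∀ n, δ n ∈ Ioc 0 1) ∧ A ⊆ ⋃ n, Icc (c n) (c n + δ n) ∧
      ∑' n, ENNReal.ofReal (δ n ^ s) < ε := by
  set η := min ε 1 / 2
  have hη : η ≠ 0 := by simp [η, hε]
  have hμ : μH[s] A = 0 := by
    simpa [Real.coe_toNNReal _ hs.le] using hausdorffMeasure_of_dimH_lt (d := s.toNNReal) hA
  rw [Measure.hausdorffMeasure_apply, ← bot_eq_zero, iSup₂_eq_bot] at hμ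
  obtain ⟨t, hAt, ht1, ht⟩ : ∃ t : ℕ → Set ℝ, A ⊆ ⋃ n, t n ∧ (∀ n, Metric.ediam (t n) ≤ 1) ∧
      ∑' n, ⨆ _ : (t n).Nonempty, Metric.ediam (t n) ^ s < η := by
    have h := pos_iff_ne_zero.2 hη
    rw [← bot_eq_zero, ← hμ 1 one_pos] at h
    simpa only [iInf_lt_iff, exists_prop] using h
  obtain ⟨τ, hτ, hτη⟩ := exists_pos_tsum_ofReal_rpow_lt hs hη ℕ
  have ht_bdd : ∀ n, Bornology.IsBounded (t n) := fun n =>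
    Metric.isBounded_iff_ediam_ne_top.2 (ne_top_of_le_ne_top ENNReal.one_ne_top (ht1 n))
  set δ : ℕ → ℝ := fun n => max (Metric.diam (t n)) (τ n)
  have hsum : ∑' n, ENNReal.ofReal (δ n ^ s) < min ε 1 :=
    calc ∑' n, ENNReal.ofReal (δ n ^ s)
        ≤ ∑' n, ((⨆ _ : (t n).Nonempty, Metric.ediam (t n) ^ s) + ENNReal.ofReal (τ n ^ s)) := by
          refine ENNReal.tsum_le_tsum fun n => ?_
          have hmax : δ n ^ s ≤ Metric.diam (t n) ^ s + τ n ^ s :=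
            (Real.rpow_max Metric.diam_nonneg (hτ n).le hs.le).trans_le
              (max_le_add_of_nonneg (Real.rpow_nonneg Metric.diam_nonneg _)
                (Real.rpow_nonneg (hτ n).le _))
          refine (ENNReal.ofReal_le_ofReal hmax).trans ?_
          exact ENNReal.ofReal_add_le.trans (by gcongr; exact ofReal_diam_rpow_le _ hs)
      _ < η + η := by rw [ENNReal.tsum_add]; exact ENNReal.add_lt_add ht hτη
      _ = min ε 1 := ENNReal.add_halves _
  refine ⟨fun n => sInf (t n), δ, fun n => ⟨(hτ n).trans_le (le_max_right _ _), ?_⟩, ?_,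
    hsum.trans_le (min_le_left _ _)⟩
  · -- `δ n ^ s` is a term of a sum below `1`
    have h : ENNReal.ofReal (δ n ^ s) < 1 :=
      (ENNReal.le_tsum n).trans_lt (hsum.trans_le (min_le_right _ _))
    rw [ENNReal.ofReal_lt_one] at h
    by_contra! h1
    exact h.not_ge (Real.one_le_rpow h1.le hs.le)
  · refine hAt.trans (iUnion_mono fun n => (ht_bdd n).subset_Icc_sInf_sSup.trans ?_)
    refine Icc_subset_Icc_right ?_
    rw [← sub_le_iff_le_add', ← Real.diam_eq (ht_bdd n)]
    exact le_max_left _ _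

lemma Icc_subset_iUnion_Icc_floor {b ℓ L : ℝ} (hL : 0 < L) :
    Icc b (b + ℓ) ⊆ ⋃ k : Fin (⌊ℓ / L⌋₊ + 1), Icc (b + k * L) (b + k * L + L) := by
  rintro y ⟨hby, hyb⟩
  have hq : 0 ≤ (y - b) / L := div_nonneg (sub_nonneg.2 hby) hL.le
  have hk : ⌊(y - b) / L⌋₊ < ⌊ℓ / L⌋₊ + 1 :=
    Nat.lt_succ_of_le (Nat.floor_le_floor (by gcongr; linarith))
  have hlo := (le_div_iff₀ hL).1 (Nat.floor_le hq)
  have hhi := (div_lt_iff₀ hL).1 (Nat.lt_floor_add_one ((y - b) / L))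
  exact mem_iUnion.2 ⟨⟨_, hk⟩, by constructor <;> simp only <;> linarith⟩

theorem box_subset_iUnion_parRect {d : ℕ} {H c δ w ℓ : ℝ} {b : Fin d → ℝ} (hδw : δ ≤ w)
    (hw : 0 < w) :
    Icc c (c + δ) ×ˢ univ.pi (fun j => Icc (b j) (b j + ℓ)) ⊆
      ⋃ k : Fin d → Fin (⌊ℓ / w ^ H⌋₊ + 1), parRect d H c (fun j => b j + k j * w ^ H) w := by
  simp only [parRect, ← prod_iUnion, iUnion_univ_pi fun j (k : Fin (⌊ℓ / w ^ H⌋₊ + 1)) =>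
    Icc (b j + k * w ^ H) (b j + k * w ^ H + w ^ H)]
  exact prod_mono (Icc_subset_Icc_right (by linarith))
    (pi_mono fun j _ => Icc_subset_iUnion_Icc_floor (Real.rpow_pos_of_pos hw H))

section HolderGraph

variable {d : ℕ} {f : ℝ → Fin d → ℝ} {H α β θ K : ℝ}

theorem exists_graph_subset_box {S : Set ℝ} {c δ : ℝ} (hK : 0 ≤ K) (hα : 0 ≤ α)
    (hf : ∀ x ∈ S, ∀ y ∈ S, ‖f x - f y‖ ≤ K * |x - y| ^ α)
    (hS : S ⊆ Icc c (c + δ)) :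
    ∃ b : Fin d → ℝ, (fun t => (t, f t)) '' S ⊆
      Icc c (c + δ) ×ˢ univ.pi (fun j => Icc (b j) (b j + 2 * K * δ ^ α)) := by
  rcases S.eq_empty_or_nonempty with rfl | ⟨x, hx⟩
  · exact ⟨0, by simp⟩
  refine ⟨fun j => f x j - K * δ ^ α, ?_⟩
  rintro _ ⟨t, ht, rfl⟩
  have hdist : |t - x| ≤ δ := by
    simpa [Real.dist_eq] using Real.dist_le_of_mem_Icc (hS ht) (hS hx)
  have hj : ∀ j, |f t j - f x j| ≤ K * δ ^ α := fun j =>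
    calc |f t j - f x j| ≤ ‖f t - f x‖ := norm_le_pi_norm (f t - f x) j
      _ ≤ K * |t - x| ^ α := hf t ht x hx
      _ ≤ K * δ ^ α := by gcongr
  refine ⟨hS ht, fun j _ => ?_⟩
  have := abs_le.1 (hj j)
  constructor <;> linarith

theorem parContent_graph_le {S : Set ℝ} {c δ : ℝ} (hβ : 0 < β) (hα : 0 ≤ α) (hθ : θ ≤ 1)
    (hαθ : α ≤ θ * H) (hK : 0 ≤ K)
    (hf : ∀ x ∈ S, ∀ y ∈ S, ‖f x - f y‖ ≤ K * |x - y| ^ α) (hδ : δ ∈ Ioc 0 1)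
    (hS : S ⊆ Icc c (c + δ)) :
    parContent d H β ((fun t => (t, f t)) '' S) ≤
      ENNReal.ofReal ((2 * K + 1) ^ d * δ ^ ((α - θ * H) * d + θ * β)) := by
  obtain ⟨b, hb⟩ := exists_graph_subset_box hK hα hf hS
  set N := ⌊2 * K * δ ^ α / (δ ^ θ) ^ H⌋₊ + 1
  have hw : 0 < δ ^ θ := Real.rpow_pos_of_pos hδ.1 θ
  have hδw : δ ≤ δ ^ θ := by simpa using Real.rpow_le_rpow_of_exponent_ge hδ.1 hδ.2 hθ
  have hN : (N : ℝ) ≤ (2 * K + 1) * δ ^ (α - θ * H) := by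
    have h1 : 1 ≤ δ ^ (α - θ * H) :=
      Real.one_le_rpow_of_pos_of_le_one_of_nonpos hδ.1 hδ.2 (by linarith)
    have h2 : 2 * K * δ ^ α / (δ ^ θ) ^ H = 2 * K * δ ^ (α - θ * H) := by
      rw [← Real.rpow_mul hδ.1.le, Real.rpow_sub hδ.1, mul_div_assoc]
    calc (N : ℝ) ≤ 2 * K * δ ^ α / (δ ^ θ) ^ H + 1 := by
          push_cast [N]
          gcongr
          exact Nat.floor_le (div_nonneg (mul_nonneg (mul_nonneg zero_le_two hK)
            (Real.rpow_nonneg hδ.1.le α)) (Real.rpow_nonneg hw.le H))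
      _ ≤ (2 * K + 1) * δ ^ (α - θ * H) := by rw [h2]; linarith
  have hcover : (fun t => (t, f t)) '' S ⊆
      ⋃ k : Fin d → Fin N, parRect d H c (fun j => b j + k j * (δ ^ θ) ^ H) (δ ^ θ) :=
    hb.trans (box_subset_iUnion_parRect hδw hw)
  calc parContent d H β ((fun t => (t, f t)) '' S)
      ≤ ∑' _ : Fin d → Fin N, ENNReal.ofReal ((δ ^ θ) ^ β) :=
        parContent_le_tsum hβ (fun _ => c) (fun (k : Fin d → Fin N) j => b j + k j * (δ ^ θ) ^ H)
          (fun _ => δ ^ θ) (fun _ => hw) hcover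
    _ = ENNReal.ofReal ((N : ℝ) ^ d * (δ ^ θ) ^ β) := by
        rw [tsum_fintype, Finset.sum_const, Finset.card_univ, Fintype.card_fun, Fintype.card_fin,
          Fintype.card_fin, nsmul_eq_mul, ENNReal.ofReal_mul (by positivity),
          ENNReal.ofReal_pow (by positivity), ENNReal.ofReal_natCast]
        push_cast
        rfl
    _ ≤ ENNReal.ofReal (((2 * K + 1) * δ ^ (α - θ * H)) ^ d * (δ ^ θ) ^ β) := by
        gcongr
    _ = ENNReal.ofReal ((2 * K + 1) ^ d * δ ^ ((α - θ * H) * d + θ * β)) := by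
        rw [mul_pow, ← Real.rpow_natCast (δ ^ _), ← Real.rpow_mul hδ.1.le,
          ← Real.rpow_mul hδ.1.le, mul_assoc, ← Real.rpow_add hδ.1]

theorem parContent_graph_eq_zero {A : Set ℝ} (hβ : 0 < β) (hα : 0 ≤ α) (hθ : θ ≤ 1)
    (hαθ : α ≤ θ * H) (hK : 0 ≤ K)
    (hf : ∀ x ∈ A, ∀ y ∈ A, ‖f x - f y‖ ≤ K * |x - y| ^ α)
    (hA : (dimH A).toReal < (α - θ * H) * d + θ * β) :
    parContent d H β ((fun t => (t, f t)) '' A) = 0 := by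
  obtain ⟨s, hAs, hs⟩ := exists_between hA
  have hs0 : 0 < s := ENNReal.toReal_nonneg.trans_lt hAs
  have hAs' : dimH A < ENNReal.ofReal s :=
    (ENNReal.lt_ofReal_iff_toReal_lt (Real.dimH_ne_top A)).2 hAs
  set C := (2 * K + 1) ^ d
  have hC : 0 < C := by positivity
  refine le_antisymm (ENNReal.le_of_forall_pos_le_add fun ε hε _ => ?_) bot_le
  obtain ⟨c, δ, hδ, hcov, hsum⟩ := exists_Icc_cover_of_dimH_lt hs0 hAs'
    (ε := ε / ENNReal.ofReal C) (by simp [hε.ne'])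
  have hpiece : ∀ n, parContent d H β ((fun t => (t, f t)) '' (A ∩ Icc (c n) (c n + δ n))) ≤
      ENNReal.ofReal C * ENNReal.ofReal (δ n ^ s) := fun n => by
    rw [← ENNReal.ofReal_mul hC.le]
    refine (parContent_graph_le hβ hα hθ hαθ hK (fun x hx y hy => hf x hx.1 y hy.1) (hδ n)
      inter_subset_right).trans ?_
    exact ENNReal.ofReal_le_ofReal (mul_le_mul_of_nonneg_left
      (Real.rpow_le_rpow_of_exponent_ge (hδ n).1 (hδ n).2 hs.le) hC.le)
  calc parContent d H β ((fun t => (t, f t)) '' A)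
      ≤ parContent d H β (⋃ n, (fun t => (t, f t)) '' (A ∩ Icc (c n) (c n + δ n))) := by
        refine parContent_mono ?_
        rw [← image_iUnion, ← inter_iUnion]
        exact image_mono (subset_inter subset_rfl hcov)
    _ ≤ ∑' n, parContent d H β ((fun t => (t, f t)) '' (A ∩ Icc (c n) (c n + δ n))) :=
        parContent_iUnion_le hβ _
    _ ≤ ∑' n, ENNReal.ofReal C * ENNReal.ofReal (δ n ^ s) := ENNReal.tsum_le_tsum hpiece
    _ = ENNReal.ofReal C * ∑' n, ENNReal.ofReal (δ n ^ s) := ENNReal.tsum_mul_left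
    _ ≤ ENNReal.ofReal C * (ε / ENNReal.ofReal C) := by gcongr
    _ ≤ 0 + ε := by rw [zero_add]; exact ENNReal.mul_div_le

end HolderGraph

theorem parDim_graph_le_of_holder_general (d : ℕ) (H α : ℝ) (hH : H ∈ Set.Ioo (0:ℝ) 1)
    (hα : 0 < α) (hαH : α ≤ H)
    (A : Set ℝ) (hA : A ⊆ Set.Icc 0 1)
    (f : ℝ → Fin d → ℝ)
    (hf : ∃ K : ℝ, 0 ≤ K ∧ ∀ x ∈ Set.Icc (0:ℝ) 1, ∀ y ∈ Set.Icc (0:ℝ) 1,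
      ‖f x - f y‖ ≤ K * |x - y| ^ α) :
    parDim d H ((fun t => (t, f t)) '' A) ≤
      min (H / α * (dimH A).toReal) ((dimH A).toReal + (H - α) * d) := by
  obtain ⟨K, hK, hfK⟩ := hf
  have hfA : ∀ x ∈ A, ∀ y ∈ A, ‖f x - f y‖ ≤ K * |x - y| ^ α :=
    fun x hx y hy => hfK x (hA hx) y (hA hy)
  have hH0 : 0 < H := hH.1
  have hD : 0 ≤ (dimH A).toReal := ENNReal.toReal_nonneg
  have hm : 0 ≤ min (H / α * (dimH A).toReal) ((dimH A).toReal + (H - α) * d) :=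
    le_min (by positivity) (add_nonneg hD (mul_nonneg (sub_nonneg.2 hαH) d.cast_nonneg))
  refine parDim_le_of_parContent_eq_zero_s6 hm fun β hβ => ?_
  rcases min_lt_iff.1 hβ with h | h
  · refine parContent_graph_eq_zero (θ := α / H) (hm.trans_lt hβ) hα.le
      (div_le_one_of_le₀ hαH hH0.le) (div_mul_cancel₀ α hH0.ne').ge hK hfA ?_
    rw [div_mul_cancel₀ α hH0.ne', sub_self, zero_mul, zero_add]
    calc (dimH A).toReal = α / H * (H / α * (dimH A).toReal) := by field_simp
      _ < α / H * β := by gcongr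
  · refine parContent_graph_eq_zero (θ := 1) (hm.trans_lt hβ) hα.le le_rfl (by linarith) hK hfA ?_
    linarith [show (α - 1 * H) * d = -((H - α) * d) by ring]

/-- For `H ∈ (0,1)`, a Borel set `A ⊆ [0,1]`, `0 < α ≤ H` and an `α`-Hölder continuous
function `f : [0,1] → ℝ^d` (i.e. `‖f(x)-f(y)‖_∞ ≤ K|x-y|^α` on `[0,1]` for some `K ≥ 0`):
`dim_{Ψ,H}(Gr_A(f)) ≤ min((H/α)·dim(A), dim(A) + (H−α)·d)`. -/
theorem parDim_graph_le_of_holder (d : ℕ) (H α : ℝ) (hH : H ∈ Set.Ioo (0:ℝ) 1)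
    (hα : 0 < α) (hαH : α ≤ H)
    (A : Set ℝ) (hAm : MeasurableSet A) (hA : A ⊆ Set.Icc 0 1)
    (f : ℝ → Fin d → ℝ)
    (hf : ∃ K : ℝ, 0 ≤ K ∧ ∀ x ∈ Set.Icc (0:ℝ) 1, ∀ y ∈ Set.Icc (0:ℝ) 1,
      ‖f x - f y‖ ≤ K * |x - y| ^ α) :
    parDim d H ((fun t => (t, f t)) '' A) ≤
      min (H / α * (dimH A).toReal) ((dimH A).toReal + (H - α) * d) :=
  parDim_graph_le_of_holder_general d H α hH hα hαH A hA f hf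
end
end
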